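/- arXiv:1304.6108 — 5 statements merged into one kernel-verified Lean document; each statement's English description precedes it below -/
import Mathlib

section
/- Let E be a finite-dimensional real vector space and 1 ≤ d ≤ dim E. Let (v₁,…,v_d) and (w₁,…,w_d) be two linearly independent families of vectors in E. Then the simple d-vectors v₁∧…∧v_d and w₁∧…∧w_d in ⋀^d E are nonzero, and there exists a nonzero scalar c ∈ ℝ with w₁∧…∧w_d = c·(v₁∧…∧v_d) if and only if span{v₁,…,v_d} = span{w₁,…,w_d}. Consequently the map sending a d-dimensional subspace spanned by (v₁,…,v_d) to the line through v₁∧…∧v_d is a well-defined injection of the Grassmannian of d-planes of E into the projective space of ⋀^d E. -/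
/-!
Over a field, `v₁ ∧ … ∧ v_d` vanishes exactly when the `vᵢ` are linearly dependent, so for
independent `v` a vector `x` satisfies `x ∧ v₁ ∧ … ∧ v_d = 0` iff `x ∈ span v`. If
`w₁ ∧ … ∧ w_d = c • v₁ ∧ … ∧ v_d` with `c ≠ 0`, wedging with `w_j` shows every `w_j` lies in
`span v`, and equal dimensions give `span v = span w`. Conversely, if `span v = span w`, both
wedges are images of alternating maps on the common span `W`, and every alternating map on
`Fin d → W` is the determinant with respect to the basis `v` times its value at `v`.
-/

open Submodule

theorem AlternatingMap.map_eq_basis_det_smul {R M N ι : Type*} [CommRing R] [AddCommGroup M]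
    [Module R M] [AddCommGroup N] [Module R N] [Fintype ι] [DecidableEq ι]
    (e : Module.Basis ι R M) (f : M [⋀^ι]→ₗ[R] N) (u : ι → M) : f u = e.det u • f e := by
  suffices f = (LinearMap.toSpanSingleton R N (f e)).compAlternatingMap e.det from
    congr($this u)
  refine e.ext_alternating fun i hi => ?_
  let σ : Equiv.Perm ι := Equiv.ofBijective i (Finite.injective_iff_bijective.1 hi)
  change f (e ∘ σ) = (LinearMap.toSpanSingleton R N (f e)).compAlternatingMap e.det (e ∘ σ)
  simp [AlternatingMap.map_perm, Module.Basis.det_self, Units.smul_def]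

namespace ExteriorAlgebra

section CommRing

variable {R M : Type*} [CommRing R] [AddCommGroup M] [Module R M] {d : ℕ}

theorem ι_mul_ιMulti_self (v : Fin d → M) (j : Fin d) : ι R (v j) * ιMulti R d v = 0 := by
  have hcons : ιMulti R (d + 1) (Fin.cons (v j) v) = ι R (v j) * ιMulti R d v := by
    rw [ιMulti_succ_apply]; rfl
  rw [← hcons]
  exact (ιMulti R _).map_eq_zero_of_eq _ (i := 0) (j := j.succ) (by simp) (Fin.succ_ne_zero j).symm

theorem exists_smul_ιMulti_of_forall_mem_span {v w : Fin d → M} (hv : LinearIndependent R v)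
    (hw : ∀ i, w i ∈ span R (Set.range v)) : ∃ c : R, c • ιMulti R d v = ιMulti R d w := by
  classical
  let b := Module.Basis.span hv
  have hb : ∀ i, (b i : M) = v i := fun i => congrArg Subtype.val (Module.Basis.span_apply hv i)
  let F := (ιMulti R d).compLinearMap (span R (Set.range v)).subtype
  refine ⟨b.det fun i => ⟨w i, hw i⟩, ?_⟩
  have := F.map_eq_basis_det_smul b fun i => ⟨w i, hw i⟩
  simp only [F, AlternatingMap.compLinearMap_apply, Submodule.subtype_apply, hb] at this
  exact this.symm

end CommRing

section Field

variable {K E : Type*} [Field K] [AddCommGroup E] [Module K E] {d : ℕ}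

theorem ιMulti_ne_zero_of_linearIndependent {v : Fin d → E} (hv : LinearIndependent K v) :
    ιMulti K d v ≠ 0 := by
  -- `v₁ ∧ … ∧ v_d` is the unique member of the independent family of `d`-fold wedges of `v`.
  have := (exteriorPower.ιMulti_family_linearIndependent_field (n := d) hv).ne_zero
    (Set.powersetCard.ofFinEmbEquiv (OrderIso.refl (Fin d)).toOrderEmbedding)
  simpa [exteriorPower.ιMulti_family, Subtype.ext_iff] using this

theorem mem_span_of_ι_mul_ιMulti_eq_zero {v : Fin d → E} (hv : LinearIndependent K v) {x : E}
    (hx : ι K x * ιMulti K d v = 0) : x ∈ span K (Set.range v) := by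
  by_contra hxv
  refine ιMulti_ne_zero_of_linearIndependent (linearIndependent_finCons.2 ⟨hv, hxv⟩) ?_
  rw [ιMulti_succ_apply]
  exact hx

theorem exists_smul_ιMulti_eq_iff {v w : Fin d → E} (hv : LinearIndependent K v)
    (hw : LinearIndependent K w) :
    (∃ c : K, c • ιMulti K d v = ιMulti K d w) ↔ span K (Set.range v) = span K (Set.range w) := by
  refine ⟨fun ⟨c, hc⟩ => ?_, fun h => exists_smul_ιMulti_of_forall_mem_span hv fun i => ?_⟩
  · have hc0 : c ≠ 0 := by
      rintro rfl
      exact ιMulti_ne_zero_of_linearIndependent hw (by rw [← hc, zero_smul])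
    have hwv : span K (Set.range w) ≤ span K (Set.range v) := by
      refine span_le.2 (Set.range_subset_iff.2 fun j => mem_span_of_ι_mul_ιMulti_eq_zero hv ?_)
      rw [← smul_eq_zero_iff_right hc0, ← mul_smul_comm, hc, ι_mul_ιMulti_self]
    have := FiniteDimensional.span_of_finite K (Set.finite_range v)
    refine (eq_of_le_of_finrank_le hwv ?_).symm
    rw [finrank_span_eq_card hv, finrank_span_eq_card hw]
  · exact h ▸ subset_span (Set.mem_range_self i)

end Field

end ExteriorAlgebra

/-- Plücker embedding, injectivity part: for two linearly independent `d`-families `v`, `w` in a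
finite-dimensional real vector space `E`, the simple `d`-vectors `v₁∧…∧v_d` and `w₁∧…∧w_d` are
nonzero; `w₁∧…∧w_d` is a nonzero scalar multiple of `v₁∧…∧v_d` iff the spans coincide; and
consequently the corresponding points in the projective space of `⋀^d E` coincide iff the spans
coincide, so the induced map from the Grassmannian of `d`-planes to `P(⋀^d E)` is a well-defined
injection. -/
theorem plucker_injective
    (E : Type*) [AddCommGroup E] [Module ℝ E]
    (d : ℕ)
    (v w : Fin d → E) (hv : LinearIndependent ℝ v) (hw : LinearIndependent ℝ w) :
    ∃ (hv0 : ExteriorAlgebra.ιMulti ℝ d v ≠ 0) (hw0 : ExteriorAlgebra.ιMulti ℝ d w ≠ 0),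
      ((∃ c : ℝ, c ≠ 0 ∧
          ExteriorAlgebra.ιMulti ℝ d w = c • ExteriorAlgebra.ιMulti ℝ d v) ↔
        Submodule.span ℝ (Set.range v) = Submodule.span ℝ (Set.range w)) ∧
      (Projectivization.mk ℝ
          (⟨ExteriorAlgebra.ιMulti ℝ d v, ExteriorAlgebra.ιMulti_range ℝ d ⟨v, rfl⟩⟩ :
            ⋀[ℝ]^d E)
          (fun h => hv0 (by simpa [Subtype.ext_iff] using h)) =
        Projectivization.mk ℝ
          (⟨ExteriorAlgebra.ιMulti ℝ d w, ExteriorAlgebra.ιMulti_range ℝ d ⟨w, rfl⟩⟩ :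
            ⋀[ℝ]^d E)
          (fun h => hw0 (by simpa [Subtype.ext_iff] using h)) ↔
        Submodule.span ℝ (Set.range v) = Submodule.span ℝ (Set.range w)) := by
  have hv0 := ExteriorAlgebra.ιMulti_ne_zero_of_linearIndependent hv
  have hw0 := ExteriorAlgebra.ιMulti_ne_zero_of_linearIndependent hw
  refine ⟨hv0, hw0, ?_, ?_⟩
  · rw [← ExteriorAlgebra.exists_smul_ιMulti_eq_iff hv hw]
    refine ⟨fun ⟨c, _, h⟩ => ⟨c, h.symm⟩, fun ⟨c, h⟩ => ⟨c, ?_, h.symm⟩⟩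
    rintro rfl
    exact hw0 (by rw [← h, zero_smul])
  · rw [Projectivization.mk_eq_mk_iff', eq_comm, ← ExteriorAlgebra.exists_smul_ιMulti_eq_iff hw hv]
    simp only [Subtype.ext_iff, SetLike.val_smul]
end

section
/- Fix integers 0 ≤ d ≤ n and identify the Grassmannian G_d(ℝⁿ) with the compact set G of real n×n matrices P satisfying Pᵀ = P, P² = P and trace(P) = d (the orthogonal projections onto d-dimensional subspaces), with the subspace topology from the matrix space. Let h : ℝ → ℝ be continuous with h ≥ 0 and h(0) > 0, and let k_t : G × G → ℝ be continuous with k_t ≥ 0 and k_t(P,P) > 0 for every P ∈ G. Then there exists a constant C > 0, depending only on h and k_t (and n, d), such that for every finite positive Borel measure μ on ℝⁿ × G whose support is contained in (closed unit ball of ℝⁿ) × G, one has ∬_{(ℝⁿ×G)²} h(‖x−y‖)·k_t(P,Q) dμ(x,P) dμ(y,Q) ≥ C · μ(ℝⁿ × G)². -/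
open MeasureTheory

instance matrixMeasurableSpace (n : ℕ) : MeasurableSpace (Matrix (Fin n) (Fin n) ℝ) :=
  borel _

instance matrixBorelSpace (n : ℕ) : BorelSpace (Matrix (Fin n) (Fin n) ℝ) := ⟨rfl⟩

/-- The Grassmannian `G_d(ℝⁿ)`, realized as the compact set of real `n×n` matrices `P` with
`Pᵀ = P`, `P² = P` and `trace P = d` (orthogonal projections onto `d`-dimensional subspaces). -/
def Grass (n d : ℕ) : Set (Matrix (Fin n) (Fin n) ℝ) :=
  {P | P.transpose = P ∧ P * P = P ∧ P.trace = (d : ℝ)}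

/-!
A continuous kernel `K` that is positive on the diagonal of a compact set `S` is bounded below by
some `ε > 0` on `U × U` for each set `U` of a finite open cover `U₁, …, U_N` of `S`. A measure
carried by `S` gives one of these sets mass at least `μ(S) / N`, so
`∬ K dμ dμ ≥ ε μ(U)² ≥ (ε / N²) μ(S)²`. The varifold kernel `h(‖x - y‖) k_t(P, Q)` is continuous
and positive on the diagonal, and `closedBall 0 1 × G_d(ℝⁿ)` is compact.
-/

open Set Topology Function
open scoped ENNReal

namespace Matrix

variable {ι : Type*} [Fintype ι] {P : Matrix ι ι ℝ}

theorem diag_eq_sum_sq_of_symm_of_idem (hsymm : Pᵀ = P) (hidem : P * P = P) (i : ι) :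
    P i i = ∑ j, P i j ^ 2 := by
  conv_lhs => rw [← hidem]
  refine (mul_apply).trans (Finset.sum_congr rfl fun j _ => ?_)
  rw [sq, ← transpose_apply P j i, hsymm]

theorem sq_entry_le_diag_of_symm_of_idem (hsymm : Pᵀ = P) (hidem : P * P = P) (i j : ι) :
    P i j ^ 2 ≤ P i i := by
  rw [diag_eq_sum_sq_of_symm_of_idem hsymm hidem i]
  exact Finset.single_le_sum (f := fun k => P i k ^ 2) (fun k _ => sq_nonneg _)
    (Finset.mem_univ j)

theorem abs_entry_le_one_of_symm_of_idem (hsymm : Pᵀ = P) (hidem : P * P = P) (i j : ι) :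
    |P i j| ≤ 1 := by
  have hdiag : P i i ≤ 1 := by nlinarith [sq_entry_le_diag_of_symm_of_idem hsymm hidem i i]
  exact (sq_le_one_iff_abs_le_one _).1
    ((sq_entry_le_diag_of_symm_of_idem hsymm hidem i j).trans hdiag)

end Matrix

theorem isClosed_grass (n d : ℕ) : IsClosed (Grass n d) :=
  (isClosed_eq continuous_id.matrix_transpose continuous_id).inter <|
    (isClosed_eq (continuous_id.matrix_mul continuous_id) continuous_id).inter <|
      isClosed_eq continuous_id.matrix_trace continuous_const

theorem isCompact_grass (n d : ℕ) : IsCompact (Grass n d) := by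
  have hbox : IsCompact (univ.pi fun _ : Fin n => univ.pi fun _ : Fin n => Icc (-1 : ℝ) 1) :=
    isCompact_univ_pi fun _ => isCompact_univ_pi fun _ => isCompact_Icc
  refine hbox.of_isClosed_subset (isClosed_grass n d) fun P ⟨hsymm, hidem, _⟩ => ?_
  simp only [Set.mem_pi, mem_univ, forall_const, mem_Icc, ← abs_le]
  exact Matrix.abs_entry_le_one_of_symm_of_idem hsymm hidem

instance (n d : ℕ) : CompactSpace (Grass n d) :=
  isCompact_iff_compactSpace.mp (isCompact_grass n d)

section

variable {X : Type*} [MeasurableSpace X]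

theorem exists_measure_biUnion_le_card_mul {ι : Type*} (μ : Measure X) {t : Finset ι}
    (ht : t.Nonempty) (U : ι → Set X) : ∃ i ∈ t, μ (⋃ j ∈ t, U j) ≤ t.card * μ (U i) := by
  obtain ⟨i, hi, hmax⟩ := t.exists_max_image (fun j => μ (U j)) ht
  refine ⟨i, hi, (measure_biUnion_finset_le t U).trans ?_⟩
  simpa only [nsmul_eq_mul] using Finset.sum_le_card_nsmul t _ _ hmax

theorem mul_measure_sq_le_lintegral_lintegral (μ : Measure X) {f : X → X → ℝ≥0∞} {U : Set X}
    (hU : MeasurableSet U) {c : ℝ≥0∞} (hf : ∀ p ∈ U, ∀ q ∈ U, c ≤ f p q) :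
    c * μ U ^ 2 ≤ ∫⁻ p, ∫⁻ q, f p q ∂μ ∂μ :=
  calc c * μ U ^ 2 = ∫⁻ _ in U, ∫⁻ _ in U, c ∂μ ∂μ := by
        simp only [setLIntegral_const, sq, mul_assoc]
    _ ≤ ∫⁻ p in U, ∫⁻ q in U, f p q ∂μ ∂μ :=
        setLIntegral_mono' hU fun p hp => setLIntegral_mono' hU fun q hq => hf p hp q hq
    _ ≤ ∫⁻ p, ∫⁻ q, f p q ∂μ ∂μ :=
        (setLIntegral_le_lintegral U _).trans
          (lintegral_mono fun p => setLIntegral_le_lintegral U _)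

end

section KernelLowerBound

variable {X : Type*} [TopologicalSpace X] {K : X → X → ℝ} {S : Set X}

theorem exists_finite_open_cover_forall_le_kernel (hK : Continuous (uncurry K))
    (hS : IsCompact S) (hdiag : ∀ p ∈ S, 0 < K p p) :
    ∃ ε > 0, ∃ (t : Finset X) (U : X → Set X),
      (∀ x ∈ t, IsOpen (U x) ∧ ∀ q ∈ U x, ∀ r ∈ U x, ε ≤ K q r) ∧ S ⊆ ⋃ x ∈ t, U x := by
  obtain ⟨ε, hε, hεK⟩ := hS.exists_forall_le' (f := fun p => K p p)
    (hK.comp (continuous_id.prodMk continuous_id)).continuousOn hdiag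
  have hnhds : ∀ p ∈ S, ∃ V, (p ∈ V ∧ IsOpen V) ∧ ∀ q ∈ V, ∀ r ∈ V, ε / 2 < K q r := by
    intro p hp
    have hW : {z : X × X | ε / 2 < K z.1 z.2} ∈ 𝓝 p ×ˢ 𝓝 p := by
      rw [← nhds_prod_eq]
      exact (isOpen_lt continuous_const hK).mem_nhds
        (show ε / 2 < K p p by linarith [hεK p hp])
    obtain ⟨V, hV, hVW⟩ := ((nhds_basis_opens p).prod_self.mem_iff).1 hW
    exact ⟨V, hV, fun q hq r hr => hVW (mk_mem_prod hq hr)⟩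
  choose! V hV hVK using hnhds
  obtain ⟨t, htS, hcover⟩ :=
    hS.elim_nhds_subcover V fun p hp => (hV p hp).2.mem_nhds (hV p hp).1
  exact ⟨ε / 2, half_pos hε, t, V,
    fun x hx => ⟨(hV x (htS x hx)).2, fun q hq r hr => (hVK x (htS x hx) q hq r hr).le⟩, hcover⟩

variable [MeasurableSpace X] [OpensMeasurableSpace X]

theorem exists_pos_mul_measure_sq_le_lintegral_lintegral
    (hK : Continuous (uncurry K)) (hS : IsCompact S) (hdiag : ∀ p ∈ S, 0 < K p p) :
    ∃ C : ℝ, 0 < C ∧ ∀ μ : Measure X, μ Sᶜ = 0 →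
      ENNReal.ofReal C * μ univ ^ 2 ≤ ∫⁻ p, ∫⁻ q, ENNReal.ofReal (K p q) ∂μ ∂μ := by
  obtain ⟨ε, hε, t, U, hU, hcover⟩ := exists_finite_open_cover_forall_le_kernel hK hS hdiag
  have hmass : ∀ μ : Measure X, μ Sᶜ = 0 → μ univ ≤ μ (⋃ x ∈ t, U x) := fun μ hμ =>
    (measure_congr (ae_eq_univ.2 hμ)).symm.le.trans (measure_mono hcover)
  rcases t.eq_empty_or_nonempty with rfl | ht
  · refine ⟨1, one_pos, fun μ hμ => ?_⟩
    have hμ0 := hmass μ hμ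
    simp only [Finset.notMem_empty, iUnion_of_empty, iUnion_empty, measure_empty,
      nonpos_iff_eq_zero] at hμ0
    simp [hμ0]
  refine ⟨ε / t.card ^ 2, by positivity, fun μ hμ => ?_⟩
  obtain ⟨x, hx, hxU⟩ := exists_measure_biUnion_le_card_mul μ ht U
  have hcard : (t.card : ℝ) ^ 2 ≠ 0 := by positivity
  calc ENNReal.ofReal (ε / t.card ^ 2) * μ univ ^ 2
      ≤ ENNReal.ofReal (ε / t.card ^ 2) * (t.card * μ (U x)) ^ 2 := by
        gcongr; exact (hmass μ hμ).trans hxU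
    _ = ENNReal.ofReal (ε / t.card ^ 2 * t.card ^ 2) * μ (U x) ^ 2 := by
        rw [ENNReal.ofReal_mul (by positivity), ENNReal.ofReal_pow (Nat.cast_nonneg _),
          ENNReal.ofReal_natCast]
        ring
    _ ≤ ∫⁻ p, ∫⁻ q, ENNReal.ofReal (K p q) ∂μ ∂μ := by
        rw [div_mul_cancel₀ ε hcard]
        exact mul_measure_sq_le_lintegral_lintegral μ (hU x hx).1.measurableSet
          fun p hp q hq => ENNReal.ofReal_le_ofReal ((hU x hx).2 p hp q hq)

end KernelLowerBound

theorem varifold_kernel_norm_ge_mass_general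
    (n d : ℕ)
    (h : ℝ → ℝ) (hcont : Continuous h) (hzero : 0 < h 0)
    (kt : Grass n d → Grass n d → ℝ) (ktcont : Continuous (Function.uncurry kt))
    (ktpos : ∀ P, 0 < kt P P) :
    ∃ C : ℝ, 0 < C ∧
      ∀ μ : Measure (EuclideanSpace ℝ (Fin n) × Grass n d), IsFiniteMeasure μ →
        μ {p | p.1 ∉ Metric.closedBall (0 : EuclideanSpace ℝ (Fin n)) 1} = 0 →
        ENNReal.ofReal C * (μ Set.univ) ^ 2 ≤
          ∫⁻ p, ∫⁻ q, ENNReal.ofReal (h ‖p.1 - q.1‖ * kt p.2 q.2) ∂μ ∂μ := by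
  have hK : Continuous (uncurry fun p q : EuclideanSpace ℝ (Fin n) × Grass n d =>
      h ‖p.1 - q.1‖ * kt p.2 q.2) :=
    (hcont.comp (continuous_fst.fst.sub continuous_snd.fst).norm).mul
      (ktcont.comp (continuous_fst.snd.prodMk continuous_snd.snd))
  have hS : IsCompact (Prod.fst ⁻¹' Metric.closedBall 0 1 :
      Set (EuclideanSpace ℝ (Fin n) × Grass n d)) := by
    simpa only [prod_univ] using (isCompact_closedBall _ _).prod (isCompact_univ (X := Grass n d))
  obtain ⟨C, hC, hbound⟩ := exists_pos_mul_measure_sq_le_lintegral_lintegral hK hS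
    fun p _ => by simpa using mul_pos hzero (ktpos p.2)
  exact ⟨C, hC, fun μ _ hμ => hbound μ hμ⟩

/-- Main theorem: for a radial continuous kernel `h(‖x−y‖)` with `h ≥ 0`, `h(0) > 0` on `ℝⁿ` and
a continuous kernel `k_t ≥ 0` with `k_t(P,P) > 0` on the Grassmannian, there is a constant
`C > 0` such that every finite positive varifold `μ` supported in (closed unit ball) × G
satisfies `∬ h(‖x−y‖)·k_t(P,Q) dμ dμ ≥ C · μ(ℝⁿ×G)²`. -/
theorem varifold_kernel_norm_ge_mass
    (n d : ℕ) (hdn : d ≤ n)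
    (h : ℝ → ℝ) (hcont : Continuous h) (hnonneg : ∀ t, 0 ≤ h t) (hzero : 0 < h 0)
    (kt : Grass n d → Grass n d → ℝ) (ktcont : Continuous (Function.uncurry kt))
    (ktnonneg : ∀ P Q, 0 ≤ kt P Q) (ktpos : ∀ P, 0 < kt P P) :
    ∃ C : ℝ, 0 < C ∧
      ∀ μ : Measure (EuclideanSpace ℝ (Fin n) × Grass n d), IsFiniteMeasure μ →
        μ {p | p.1 ∉ Metric.closedBall (0 : EuclideanSpace ℝ (Fin n)) 1} = 0 →
        ENNReal.ofReal C * (μ Set.univ) ^ 2 ≤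
          ∫⁻ p, ∫⁻ q, ENNReal.ofReal (h ‖p.1 - q.1‖ * kt p.2 q.2) ∂μ ∂μ :=
  varifold_kernel_norm_ge_mass_general n d h hcont hzero kt ktcont ktpos
end

section
/- Let Γ be a compact topological group with its Haar probability measure λ, acting continuously and transitively on a compact metric space (M, dist) by isometries (dist(g•u, g•v) = dist(u,v) for all g ∈ Γ and u,v ∈ M). Let k : M × M → ℝ be continuous with k ≥ 0 and k(u,u) > 0 for every u ∈ M. Then there exists a constant c > 0, depending only on Γ, M and k, such that for every finite positive Borel measure ν on M, ∬_{M×M} k(u,v) dν(u) dν(v) ≥ c · ν(M)². -/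
/-!
Each point `u` has an open neighbourhood `U` with `k ≥ ε` on `U × U`, where `ε > 0` is half a
positive lower bound of `k` on the diagonal. Finitely many such sets `U₁, …, U_N` cover `M`, so one
of them carries mass `ν(Uᵢ) ≥ ν(M) / N`, and restricting the double integral to `Uᵢ × Uᵢ` gives
`∬ k dν dν ≥ ε ν(Uᵢ)² ≥ (ε / N²) ν(M)²`.
-/

open MeasureTheory Set Finset

section Measure

variable {α : Type*} [MeasurableSpace α]

theorem const_mul_measure_sq_le_lintegral_lintegral {μ : Measure α} {s : Set α}
    (hs : MeasurableSet s) {f : α → α → ENNReal} {ε : ENNReal}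
    (hf : ∀ u ∈ s, ∀ v ∈ s, ε ≤ f u v) :
    ε * μ s ^ 2 ≤ ∫⁻ u, ∫⁻ v, f u v ∂μ ∂μ :=
  have inner_ge : ∀ u ∈ s, ε * μ s ≤ ∫⁻ v, f u v ∂μ := fun u hu =>
    calc ε * μ s = ∫⁻ _ in s, ε ∂μ := (setLIntegral_const s ε).symm
      _ ≤ ∫⁻ v in s, f u v ∂μ := setLIntegral_mono' hs (hf u hu)
      _ ≤ ∫⁻ v, f u v ∂μ := setLIntegral_le_lintegral s _
  calc ε * μ s ^ 2 = ∫⁻ _ in s, ε * μ s ∂μ := by rw [setLIntegral_const, pow_two, mul_assoc]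
    _ ≤ ∫⁻ u in s, ∫⁻ v, f u v ∂μ ∂μ := setLIntegral_mono' hs inner_ge
    _ ≤ ∫⁻ u, ∫⁻ v, f u v ∂μ ∂μ := setLIntegral_le_lintegral s _

theorem exists_measure_univ_le_card_mul {ι : Type*} (μ : Measure α) {t : Finset ι}
    (ht : t.Nonempty) {U : ι → Set α} (hU : univ ⊆ ⋃ i ∈ t, U i) :
    ∃ i ∈ t, μ univ ≤ #t * μ (U i) := by
  obtain ⟨i, hi, hmax⟩ := t.exists_max_image (fun i => μ (U i)) ht
  refine ⟨i, hi, ?_⟩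
  calc μ univ ≤ μ (⋃ j ∈ t, U j) := measure_mono hU
    _ ≤ ∑ j ∈ t, μ (U j) := measure_biUnion_finset_le t U
    _ ≤ #t • μ (U i) := Finset.sum_le_card_nsmul t _ _ hmax
    _ = #t * μ (U i) := nsmul_eq_mul _ _

end Measure

section Topology

variable {X : Type*} [TopologicalSpace X] {k : X → X → ℝ}

theorem exists_isOpen_mem_forall_lt_on_sq (hk : Continuous (Function.uncurry k)) {x : X}
    {ε : ℝ} (hx : ε < k x x) :
    ∃ U, IsOpen U ∧ x ∈ U ∧ ∀ u ∈ U, ∀ v ∈ U, ε < k u v := by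
  obtain ⟨U, V, hU, hV, hxU, hxV, hUV⟩ :=
    isOpen_prod_iff.mp (isOpen_Ioi.preimage hk) x x hx
  exact ⟨U ∩ V, hU.inter hV, ⟨hxU, hxV⟩, fun u hu v hv => hUV (mk_mem_prod hu.1 hv.2)⟩

theorem exists_pos_finset_isOpen_cover_forall_lt_on_sq [CompactSpace X]
    (hk : Continuous (Function.uncurry k)) (hpos : ∀ x, 0 < k x x) :
    ∃ ε > 0, ∃ (t : Finset X) (U : X → Set X), (∀ x, IsOpen (U x)) ∧
      univ ⊆ ⋃ x ∈ t, U x ∧ ∀ x, ∀ u ∈ U x, ∀ v ∈ U x, ε < k u v := by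
  obtain ⟨a, ha, hak⟩ := isCompact_univ.exists_forall_le'
    (f := fun x => k x x) (hk.comp (continuous_id.prodMk continuous_id)).continuousOn
    fun x _ => hpos x
  have hlt : ∀ x, a / 2 < k x x := fun x => by linarith [hak x (mem_univ x)]
  choose U hUopen hxU hUk using fun x => exists_isOpen_mem_forall_lt_on_sq hk (hlt x)
  obtain ⟨t, ht⟩ := isCompact_univ.elim_finite_subcover U hUopen
    fun x _ => mem_iUnion.mpr ⟨x, hxU x⟩
  exact ⟨a / 2, by positivity, t, U, hUopen, ht, hUk⟩

end Topology

theorem exists_pos_mul_measure_univ_sq_le_lintegral_lintegral {X : Type*} [TopologicalSpace X]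
    [CompactSpace X] [MeasurableSpace X] [OpensMeasurableSpace X] {k : X → X → ℝ}
    (hk : Continuous (Function.uncurry k)) (hpos : ∀ x, 0 < k x x) :
    ∃ c : ℝ, 0 < c ∧ ∀ μ : Measure X,
      ENNReal.ofReal c * μ univ ^ 2 ≤ ∫⁻ u, ∫⁻ v, ENNReal.ofReal (k u v) ∂μ ∂μ := by
  rcases isEmpty_or_nonempty X with hX | ⟨⟨x₀⟩⟩
  · exact ⟨1, one_pos, fun μ => by simp [Measure.eq_zero_of_isEmpty μ]⟩
  obtain ⟨ε, hε, t, U, hUopen, hcover, hUk⟩ :=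
    exists_pos_finset_isOpen_cover_forall_lt_on_sq hk hpos
  have ht : t.Nonempty := by
    obtain ⟨x, hx, -⟩ := mem_iUnion₂.mp (hcover (mem_univ x₀))
    exact ⟨x, hx⟩
  have hN : (0 : ℝ) < #t := by exact_mod_cast ht.card_pos
  have hcN : ENNReal.ofReal (ε / #t ^ 2) * (#t : ENNReal) ^ 2 = ENNReal.ofReal ε := by
    rw [← ENNReal.ofReal_natCast, ← ENNReal.ofReal_pow hN.le, ← ENNReal.ofReal_mul (by positivity),
      div_mul_cancel₀ _ (by positivity)]
  refine ⟨ε / #t ^ 2, by positivity, fun μ => ?_⟩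
  obtain ⟨i, -, hi⟩ := exists_measure_univ_le_card_mul μ ht hcover
  calc ENNReal.ofReal (ε / #t ^ 2) * μ univ ^ 2
      ≤ ENNReal.ofReal (ε / #t ^ 2) * (#t * μ (U i)) ^ 2 := by gcongr
    _ = ENNReal.ofReal ε * μ (U i) ^ 2 := by rw [mul_pow, ← mul_assoc, hcN]
    _ ≤ ∫⁻ u, ∫⁻ v, ENNReal.ofReal (k u v) ∂μ ∂μ :=
      const_mul_measure_sq_le_lintegral_lintegral (hUopen i).measurableSet
        fun u hu v hv => ENNReal.ofReal_le_ofReal (hUk i u hu v hv).le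

theorem kernel_double_integral_ge_mass_sq_general
    (M : Type*) [MetricSpace M] [CompactSpace M]
    [MeasurableSpace M] [BorelSpace M]
    (k : M → M → ℝ) (hkcont : Continuous (Function.uncurry k))
    (hkpos : ∀ u : M, 0 < k u u) :
    ∃ c : ℝ, 0 < c ∧
      ∀ ν : Measure M, IsFiniteMeasure ν →
        ENNReal.ofReal c * (ν Set.univ) ^ 2 ≤
          ∫⁻ u, ∫⁻ v, ENNReal.ofReal (k u v) ∂ν ∂ν := by
  obtain ⟨c, hc, hbound⟩ := exists_pos_mul_measure_univ_sq_le_lintegral_lintegral hkcont hkpos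
  exact ⟨c, hc, fun ν _ => hbound ν⟩

/-- If a compact topological group `Γ` (with its Haar probability measure) acts continuously and
transitively by isometries on a compact metric space `M`, and `k : M × M → ℝ` is continuous,
nonnegative, with `k(u,u) > 0` for every `u`, then there is a constant `c > 0` such that every
finite positive Borel measure `ν` on `M` satisfies `∬ k(u,v) dν(u) dν(v) ≥ c · ν(M)²`. -/
theorem kernel_double_integral_ge_mass_sq
    (Γ : Type*) [Group Γ] [TopologicalSpace Γ] [IsTopologicalGroup Γ] [CompactSpace Γ]
    [MeasurableSpace Γ] [BorelSpace Γ]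
    (lam : Measure Γ) [lam.IsHaarMeasure] [IsProbabilityMeasure lam]
    (M : Type*) [MetricSpace M] [CompactSpace M]
    [MeasurableSpace M] [BorelSpace M]
    [MulAction Γ M] [ContinuousSMul Γ M]
    (htrans : ∀ u v : M, ∃ g : Γ, g • u = v)
    (hisom : ∀ (g : Γ) (u v : M), dist (g • u) (g • v) = dist u v)
    (k : M → M → ℝ) (hkcont : Continuous (Function.uncurry k))
    (hknonneg : ∀ u v : M, 0 ≤ k u v) (hkpos : ∀ u : M, 0 < k u u) :
    ∃ c : ℝ, 0 < c ∧
      ∀ ν : Measure M, IsFiniteMeasure ν →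
        ENNReal.ofReal c * (ν Set.univ) ^ 2 ≤
          ∫⁻ u, ∫⁻ v, ENNReal.ofReal (k u v) ∂ν ∂ν :=
  kernel_double_integral_ge_mass_sq_general M k hkcont hkpos
end

section
/- Let n ≥ 1 and 1 ≤ d ≤ n. Let A : ℝ → L(ℝⁿ, ℝⁿ) be a curve of linear maps, differentiable at t = 0 with A(0) = id, and let (e₁,…,e_d) be an orthonormal family in ℝⁿ. Define J(t) = √(det(⟨A(t)e_i, A(t)e_j⟩)_{1≤i,j≤d}), the d-dimensional Jacobian of A(t) along span(e₁,…,e_d). Then J is differentiable at t = 0 and J'(0) = Σ_{i=1}^d ⟨e_i, A'(0)e_i⟩. -/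
/-!
At `t = 0` the Gram matrix `G t = (⟪A t eᵢ, A t eⱼ⟫)ᵢⱼ` is the identity, since the family is
orthonormal, and its entrywise derivative is `⟪A' eᵢ, eⱼ⟫ + ⟪eᵢ, A' eⱼ⟫`. The derivative of the
determinant at the identity is the trace, so `(det G)'(0) = 2 ∑ᵢ ⟪eᵢ, A' eᵢ⟫`, and the square
root halves this because `det (G 0) = 1`.
-/

open scoped RealInnerProductSpace

namespace Matrix

variable {ι : Type*} [Fintype ι] [DecidableEq ι]

/-- A permutation other than the identity moves at least two points, so at least one of them
survives the erasure of `i`. -/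
theorem prod_erase_one_apply_perm_eq_zero {R : Type*} [CommMonoidWithZero R]
    {σ : Equiv.Perm ι} (hσ : σ ≠ 1) (i : ι) :
    ∏ j ∈ Finset.univ.erase i, (1 : Matrix ι ι R) (σ j) j = 0 := by
  obtain ⟨a, ha⟩ : ∃ a, σ a ≠ a := by
    by_contra! h
    exact hσ (Equiv.ext h)
  have hσa : σ (σ a) ≠ σ a := fun h => ha (σ.injective h)
  by_cases hai : a = i
  · subst hai
    exact Finset.prod_eq_zero (Finset.mem_erase.2 ⟨ha, Finset.mem_univ _⟩) (one_apply_ne hσa)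
  · exact Finset.prod_eq_zero (Finset.mem_erase.2 ⟨hai, Finset.mem_univ _⟩) (one_apply_ne ha)

theorem hasDerivAt_det_of_eq_one {𝕜 : Type*} [NontriviallyNormedField 𝕜]
    {g : 𝕜 → Matrix ι ι 𝕜} {g' : Matrix ι ι 𝕜} {x : 𝕜}
    (hg : ∀ i j, HasDerivAt (fun t => g t i j) (g' i j) x) (hx : g x = 1) :
    HasDerivAt (fun t => (g t).det) g'.trace x := by
  simp only [det_apply]
  refine (HasDerivAt.fun_sum fun σ _ => (HasDerivAt.fun_finsetProd fun i _ =>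
    hg (σ i) i).const_smul (Equiv.Perm.sign σ)).congr_deriv ?_
  -- In the Leibniz expansion at `g x = 1`, only the identity permutation contributes.
  rw [Finset.sum_eq_single (1 : Equiv.Perm ι) (fun σ _ hσ => by
    simp [hx, prod_erase_one_apply_perm_eq_zero hσ]) (by simp)]
  simp [hx, trace]

end Matrix

theorem HasDerivAt.inner_apply_apply {E F : Type*} [NormedAddCommGroup E] [NormedSpace ℝ E]
    [NormedAddCommGroup F] [InnerProductSpace ℝ F] {A : ℝ → E →L[ℝ] F} {A' : E →L[ℝ] F}
    {x : ℝ} (hA : HasDerivAt A A' x) (u v : E) :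
    HasDerivAt (fun t => ⟪A t u, A t v⟫) (⟪A x u, A' v⟫ + ⟪A' u, A x v⟫) x := by
  simpa using (hA.clm_apply (hasDerivAt_const x u)).inner ℝ (hA.clm_apply (hasDerivAt_const x v))

theorem hasDerivAt_jacobian_general
    (n d : ℕ)
    (A : ℝ → (EuclideanSpace ℝ (Fin n) →L[ℝ] EuclideanSpace ℝ (Fin n)))
    (A' : EuclideanSpace ℝ (Fin n) →L[ℝ] EuclideanSpace ℝ (Fin n))
    (hA : HasDerivAt A A' 0)
    (hA0 : A 0 = ContinuousLinearMap.id ℝ (EuclideanSpace ℝ (Fin n)))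
    (e : Fin d → EuclideanSpace ℝ (Fin n)) (he : Orthonormal ℝ e) :
    HasDerivAt
      (fun t : ℝ =>
        Real.sqrt (Matrix.det (Matrix.of fun i j : Fin d => ⟪A t (e i), A t (e j)⟫)))
      (∑ i : Fin d, ⟪e i, A' (e i)⟫) 0 := by
  have hgram : (Matrix.of fun i j : Fin d => ⟪A 0 (e i), A 0 (e j)⟫) = 1 := by
    ext i j
    simpa [hA0, Matrix.one_apply] using orthonormal_iff_ite.1 he i j
  have hdet := Matrix.hasDerivAt_det_of_eq_one
    (g := fun t => Matrix.of fun i j : Fin d => ⟪A t (e i), A t (e j)⟫)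
    (g' := Matrix.of fun i j => ⟪e i, A' (e j)⟫ + ⟪A' (e i), e j⟫)
    (fun i j => by simpa [hA0] using hA.inner_apply_apply (e i) (e j)) hgram
  have htrace : (Matrix.of fun i j : Fin d => ⟪e i, A' (e j)⟫ + ⟪A' (e i), e j⟫).trace =
      2 * ∑ i, ⟪e i, A' (e i)⟫ := by
    simp [Matrix.trace, real_inner_comm, Finset.mul_sum, two_mul]
  have hdet0 : (Matrix.of fun i j : Fin d => ⟪A 0 (e i), A 0 (e j)⟫).det = 1 := by
    rw [hgram, Matrix.det_one]
  convert hdet.sqrt (by rw [hdet0]; exact one_ne_zero) using 1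
  rw [hdet0, htrace]
  norm_num

/-- Derivative of the `d`-dimensional Jacobian: if `A(t)` is a curve of linear maps of `ℝⁿ`
differentiable at `0` with `A(0) = id`, and `(e₁,…,e_d)` is an orthonormal family, then
`J(t) = √(det(⟨A(t)e_i, A(t)e_j⟩)_{i,j})` is differentiable at `0` with
`J'(0) = Σ_i ⟨e_i, A'(0)e_i⟩`. -/
theorem hasDerivAt_jacobian
    (n d : ℕ) (hn : 1 ≤ n) (hd1 : 1 ≤ d) (hdn : d ≤ n)
    (A : ℝ → (EuclideanSpace ℝ (Fin n) →L[ℝ] EuclideanSpace ℝ (Fin n)))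
    (A' : EuclideanSpace ℝ (Fin n) →L[ℝ] EuclideanSpace ℝ (Fin n))
    (hA : HasDerivAt A A' 0)
    (hA0 : A 0 = ContinuousLinearMap.id ℝ (EuclideanSpace ℝ (Fin n)))
    (e : Fin d → EuclideanSpace ℝ (Fin n)) (he : Orthonormal ℝ e) :
    HasDerivAt
      (fun t : ℝ =>
        Real.sqrt (Matrix.det (Matrix.of fun i j : Fin d => ⟪A t (e i), A t (e j)⟫)))
      (∑ i : Fin d, ⟪e i, A' (e i)⟫) 0 :=
  hasDerivAt_jacobian_general n d A A' hA hA0 e he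
end

section
/- Let Γ be a compact topological group with Haar probability measure λ, acting continuously on a compact metric space (M, dist) by isometries. Let u₀ ∈ M, δ > 0, and let φ : M → ℝ be a continuous nonnegative function whose support is contained in the open ball of radius δ about u₀ and which satisfies ∫_Γ φ(g•u)² dλ(g) ≤ 1 for all u ∈ M. Define ψ : M × M → ℝ by ψ(u,v) = ∫_Γ φ(g•u)·φ(g•v) dλ(g). Then ψ is continuous and nonnegative, ψ(u,v) ≤ 1 for all u, v ∈ M, and ψ(u,v) = 0 whenever dist(u,v) ≥ 2δ. -/
open MeasureTheory

/-! The bound `ψ ≤ 1` is the pointwise inequality `ab ≤ (a² + b²)/2` integrated against the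
hypothesis on `∫ φ(g•u)²`. For `dist(u,v) ≥ 2δ` the integrand vanishes identically: as `g` acts
isometrically, `g•u` and `g•v` cannot both lie in the ball of radius `δ` about `u₀`. Continuity
is dominated convergence, `φ` being bounded on the compact space `M`. -/

lemma integral_mul_le_half_add_integral_sq {α : Type*} [MeasurableSpace α] {μ : Measure α}
    {f g : α → ℝ} (hfg : Integrable (fun a => f a * g a) μ) (hf : Integrable (fun a => f a ^ 2) μ)
    (hg : Integrable (fun a => g a ^ 2) μ) :
    ∫ a, f a * g a ∂μ ≤ ((∫ a, f a ^ 2 ∂μ) + ∫ a, g a ^ 2 ∂μ) / 2 := by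
  rw [← integral_add hf hg, ← integral_div]
  exact integral_mono hfg ((hf.add hg).div_const 2) fun a => by
    nlinarith [sq_nonneg (f a - g a)]

lemma mul_eq_zero_of_support_subset_ball {M : Type*} [PseudoMetricSpace M] {φ : M → ℝ}
    {u₀ : M} {δ : ℝ} (hφ : Function.support φ ⊆ Metric.ball u₀ δ) {x y : M}
    (hxy : 2 * δ ≤ dist x y) : φ x * φ y = 0 := by
  by_contra hne
  have hx : dist x u₀ < δ := hφ (left_ne_zero_of_mul hne)
  have hy : dist y u₀ < δ := hφ (right_ne_zero_of_mul hne)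
  linarith [dist_triangle_right x y u₀]

lemma continuous_integral_of_continuous_uncurry_of_bound {X α : Type*} [TopologicalSpace X]
    [FirstCountableTopology X] [TopologicalSpace α] [MeasurableSpace α] [OpensMeasurableSpace α]
    {μ : Measure α} [IsFiniteMeasure μ] {F : X → α → ℝ} (hF : Continuous (Function.uncurry F))
    {C : ℝ} (hC : ∀ x a, |F x a| ≤ C) : Continuous fun x => ∫ a, F x a ∂μ :=
  continuous_of_dominated (bound := fun _ => C)
    (fun x => (hF.comp (Continuous.prodMk_right x)).aestronglyMeasurable)
    (fun x => ae_of_all _ (hC x)) (integrable_const C)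
    (ae_of_all _ fun a => hF.comp (Continuous.prodMk_left a))

lemma exists_abs_mul_le_of_continuous {M : Type*} [TopologicalSpace M] [CompactSpace M]
    {φ : M → ℝ} (hφ : Continuous φ) : ∃ C, ∀ x y, |φ x * φ y| ≤ C := by
  obtain ⟨C, hC⟩ := isCompact_univ.exists_bound_of_continuousOn hφ.continuousOn
  have hC' (x : M) : |φ x| ≤ C := hC x trivial
  refine ⟨C * C, fun x y => ?_⟩
  rw [abs_mul]
  exact mul_le_mul (hC' x) (hC' y) (abs_nonneg _) ((abs_nonneg _).trans (hC' x))

section SmulProduct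

variable {Γ M : Type*} [Monoid Γ] [TopologicalSpace Γ] [MeasurableSpace Γ]
  [OpensMeasurableSpace Γ] {μ : Measure Γ} [IsFiniteMeasure μ] [TopologicalSpace M]
  [CompactSpace M] [MulAction Γ M] [ContinuousSMul Γ M] {φ : M → ℝ}

lemma integrable_comp_smul_mul (hφ : Continuous φ) (u v : M) :
    Integrable (fun g : Γ => φ (g • u) * φ (g • v)) μ := by
  obtain ⟨C, hC⟩ := exists_abs_mul_le_of_continuous hφ
  exact Integrable.of_bound (by fun_prop : Continuous _).aestronglyMeasurable C
    (ae_of_all _ fun g => hC (g • u) (g • v))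

lemma continuous_integral_comp_smul_mul [FirstCountableTopology M] (hφ : Continuous φ) :
    Continuous fun p : M × M => ∫ g, φ (g • p.1) * φ (g • p.2) ∂μ := by
  obtain ⟨C, hC⟩ := exists_abs_mul_le_of_continuous hφ
  exact continuous_integral_of_continuous_uncurry_of_bound (by fun_prop)
    fun p g => hC (g • p.1) (g • p.2)

end SmulProduct

theorem regularizing_function_properties_general
    (Γ : Type*) [Group Γ] [TopologicalSpace Γ]
    [MeasurableSpace Γ] [BorelSpace Γ]
    (lam : Measure Γ) [IsProbabilityMeasure lam]
    (M : Type*) [MetricSpace M] [CompactSpace M]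
    [MulAction Γ M] [ContinuousSMul Γ M]
    (hisom : ∀ (g : Γ) (u v : M), dist (g • u) (g • v) = dist u v)
    (u₀ : M) (δ : ℝ)
    (φ : M → ℝ) (hφcont : Continuous φ) (hφnonneg : ∀ u, 0 ≤ φ u)
    (hφsupp : Function.support φ ⊆ Metric.ball u₀ δ)
    (hφL2 : ∀ u : M, ∫ g, (φ (g • u)) ^ 2 ∂lam ≤ 1) :
    Continuous (fun p : M × M => ∫ g, φ (g • p.1) * φ (g • p.2) ∂lam) ∧
    (∀ u v : M, 0 ≤ ∫ g, φ (g • u) * φ (g • v) ∂lam) ∧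
    (∀ u v : M, (∫ g, φ (g • u) * φ (g • v) ∂lam) ≤ 1) ∧
    (∀ u v : M, 2 * δ ≤ dist u v → (∫ g, φ (g • u) * φ (g • v) ∂lam) = 0) := by
  have hsq (u : M) : Integrable (fun g : Γ => φ (g • u) ^ 2) lam := by
    simpa only [sq] using integrable_comp_smul_mul hφcont u u
  refine ⟨continuous_integral_comp_smul_mul hφcont, fun u v => ?_, fun u v => ?_,
    fun u v huv => ?_⟩
  · exact integral_nonneg fun g => mul_nonneg (hφnonneg _) (hφnonneg _)
  · linarith [integral_mul_le_half_add_integral_sq (integrable_comp_smul_mul hφcont u v)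
      (hsq u) (hsq v), hφL2 u, hφL2 v]
  · refine integral_eq_zero_of_ae (ae_of_all _ fun g => ?_)
    exact mul_eq_zero_of_support_subset_ball hφsupp (by rwa [hisom])

/-- Properties of the regularizing function `ψ(u,v) = ∫_Γ φ(g•u)·φ(g•v) dλ(g)`: if `Γ` is a
compact group with Haar probability measure `λ` acting continuously by isometries on a compact
metric space `M`, and `φ ≥ 0` is continuous, supported in the ball of radius `δ` about `u₀`,
with `∫_Γ φ(g•u)² dλ(g) ≤ 1` for all `u`, then `ψ` is continuous, nonnegative, bounded by `1`,
and vanishes whenever `dist(u,v) ≥ 2δ`. -/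
theorem regularizing_function_properties
    (Γ : Type*) [Group Γ] [TopologicalSpace Γ] [IsTopologicalGroup Γ] [CompactSpace Γ]
    [MeasurableSpace Γ] [BorelSpace Γ]
    (lam : Measure Γ) [lam.IsHaarMeasure] [IsProbabilityMeasure lam]
    (M : Type*) [MetricSpace M] [CompactSpace M]
    [MulAction Γ M] [ContinuousSMul Γ M]
    (hisom : ∀ (g : Γ) (u v : M), dist (g • u) (g • v) = dist u v)
    (u₀ : M) (δ : ℝ) (hδ : 0 < δ)
    (φ : M → ℝ) (hφcont : Continuous φ) (hφnonneg : ∀ u, 0 ≤ φ u)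
    (hφsupp : Function.support φ ⊆ Metric.ball u₀ δ)
    (hφL2 : ∀ u : M, ∫ g, (φ (g • u)) ^ 2 ∂lam ≤ 1) :
    Continuous (fun p : M × M => ∫ g, φ (g • p.1) * φ (g • p.2) ∂lam) ∧
    (∀ u v : M, 0 ≤ ∫ g, φ (g • u) * φ (g • v) ∂lam) ∧
    (∀ u v : M, (∫ g, φ (g • u) * φ (g • v) ∂lam) ≤ 1) ∧
    (∀ u v : M, 2 * δ ≤ dist u v → (∫ g, φ (g • u) * φ (g • v) ∂lam) = 0) :=
  regularizing_function_properties_general Γ lam M hisom u₀ δ φ hφcont hφnonneg hφsupp hφL2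
end
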